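/- For integers n ≥ k ≥ 5 and 2 ≤ s ≤ ⌊(k-1)/2⌋, the graph W(n,k,s) := K_s ∨ ((n-k+s)·K_1 ∪ K_{k-2s}) is 2-connected and contains no cycle of length at least k. -/

import Mathlib

/-!
Every apex vertex of `W(a,b,c) = K_a ∨ (b·K_1 ∪ K_c)` is adjacent to all other vertices, and
there are at least two of them, so deleting one vertex leaves a graph with a dominating vertex.

For the cycles, count the vertices of a cycle in the three parts. Both cycle-neighbours of a
vertex of `b·K_1` lie in `K_a`, so the darts leaving `b·K_1` are among the darts entering
`K_a`: the cycle visits `b·K_1` at most as often as `K_a`. If it visits both `b·K_1` and `K_c`,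
it has to leave `K_c` by a dart into `K_a`, and the inequality is strict. So the length is at
most `a + c`, `2a` or `a + (a - 1) + c`, each below `2a + c`, which is `k` for `a = s`,
`c = k - 2s`.
-/

open SimpleGraph

/-- Is the vertex in the third component (the clique `K_c`)? -/
def inClq {a b c : ℕ} : (Fin a ⊕ (Fin b ⊕ Fin c)) → Prop
  | Sum.inr (Sum.inr _) => True
  | _ => False

/-- The graph `W(a,b,c) = K_a ∨ (b·K_1 ∪ K_c)`: a clique on `a` vertices joined to
`b` isolated vertices together with a clique on `c` vertices. -/
def Wgraph (a b c : ℕ) : SimpleGraph (Fin a ⊕ (Fin b ⊕ Fin c)) where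
  Adj x y := x ≠ y ∧ (x.isLeft ∨ y.isLeft ∨ (inClq x ∧ inClq y))
  symm := ⟨by
    rintro x y ⟨hne, h⟩
    exact ⟨hne.symm, by tauto⟩⟩
  loopless := ⟨fun x h => h.1 rfl⟩

/-- A graph is 2-connected: connected, at least 3 vertices, and still connected after
deleting any single vertex. -/
def TwoConnected {V : Type*} [Fintype V] (G : SimpleGraph V) : Prop :=
  G.Connected ∧ 3 ≤ Fintype.card V ∧
    ∀ v : V, ((⊤ : G.Subgraph).deleteVerts {v}).coe.Connected

/-- `G` contains a cycle of length at least `k`. -/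
def HasCycleGe {V : Type*} (G : SimpleGraph V) (k : ℕ) : Prop :=
  ∃ (u : V) (c : G.Walk u u), c.IsCycle ∧ k ≤ c.length

theorem List.countP_lt_countP_of_mem {α : Type*} {l : List α} {p q : α → Bool}
    (h : ∀ x ∈ l, p x → q x) {y : α} (hy : y ∈ l) (hqy : q y) (hpy : ¬ p y) :
    l.countP p < l.countP q := by
  have hfilter : l.countP p = (l.filter q).countP p := by
    rw [List.countP_filter]
    exact List.countP_congr fun x hx => by grind
  rw [hfilter, List.countP_eq_length_filter (p := q)]
  exact List.countP_lt_length_iff.mpr ⟨y, List.mem_filter.mpr ⟨hy, hqy⟩, by simpa using hpy⟩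

theorem List.Nodup.countP_le_card_of_subset_range {α β : Type*} [Fintype β] {l : List α}
    (hl : l.Nodup) {p : α → Bool} {f : β → α} (hp : {x | p x} ⊆ Set.range f) :
    l.countP p ≤ Fintype.card β := by
  classical
  rw [List.countP_eq_length_filter, ← List.toFinset_card_of_nodup (hl.filter p)]
  calc (l.filter p).toFinset.card ≤ (Finset.univ.image f).card := by
        refine Finset.card_le_card fun x hx => ?_
        obtain ⟨b, rfl⟩ := hp (List.mem_filter.mp (List.mem_toFinset.mp hx)).2
        exact Finset.mem_image_of_mem f (Finset.mem_univ b)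
    _ ≤ Fintype.card β := Finset.card_image_le

namespace SimpleGraph

variable {V : Type*} {G : SimpleGraph V}

theorem connected_of_forall_adj (u : V) (h : ∀ v, v ≠ u → G.Adj u v) : G.Connected := by
  have hu : ∀ v, G.Reachable u v := fun v => by
    by_cases hv : v = u
    · rw [hv]
    · exact (h v hv).reachable
  exact (connected_iff G).mpr ⟨fun x y => (hu x).symm.trans (hu y), ⟨u⟩⟩

theorem deleteVerts_singleton_connected_of_forall_adj {u v : V} (huv : u ≠ v)
    (h : ∀ w, w ≠ u → G.Adj u w) : ((⊤ : G.Subgraph).deleteVerts {v}).coe.Connected :=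
  connected_of_forall_adj ⟨u, by simp [huv]⟩ fun w hw => by
    simpa [huv, w.2.2] using h w (fun hwu => hw (Subtype.ext hwu))

namespace Walk

theorem countP_support_tail {u v : V} (p : G.Walk u v) (f : V → Bool) :
    p.support.tail.countP f = p.darts.countP (f ·.snd) := by
  rw [← p.map_snd_darts, List.countP_map]
  rfl

theorem countP_darts_fst {u : V} (c : G.Walk u u) (f : V → Bool) :
    c.darts.countP (f ·.fst) = c.support.tail.countP f := by
  have hlast := congrArg (List.countP f) (c.support.dropLast_append_getLast c.support_ne_nil)
  have hhead := congrArg (List.countP f) c.cons_tail_support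
  rw [c.getLast_support, List.countP_append, List.countP_singleton] at hlast
  rw [List.countP_cons] at hhead
  rw [← c.map_fst_darts, List.countP_map] at hlast
  exact Nat.add_right_cancel (hlast.trans hhead.symm)

theorem countP_support_tail_le {u : V} (c : G.Walk u u) {p q : V → Bool}
    (h : ∀ x y, G.Adj x y → q x → p y) :
    c.support.tail.countP q ≤ c.support.tail.countP p := by
  rw [← c.countP_darts_fst, c.countP_support_tail]
  exact List.countP_mono_left fun d _ => h _ _ d.adj

theorem countP_support_tail_lt {u : V} (c : G.Walk u u) {p q : V → Bool}
    (h : ∀ x y, G.Adj x y → q x → p y) {d : G.Dart} (hd : d ∈ c.darts)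
    (hp : p d.snd) (hq : ¬ q d.fst) :
    c.support.tail.countP q < c.support.tail.countP p := by
  rw [← c.countP_darts_fst, c.countP_support_tail]
  exact List.countP_lt_countP_of_mem (fun d _ => h _ _ d.adj) hd hp hq

theorem exists_dart_fst_mem_snd_notMem [DecidableEq V] {u x y : V} (c : G.Walk u u) (S : Set V)
    (hx : x ∈ c.support) (hy : y ∈ c.support) (hxS : x ∈ S) (hyS : y ∉ S) :
    ∃ d ∈ c.darts, d.fst ∈ S ∧ d.snd ∉ S := by
  obtain ⟨d, hd, hdS⟩ := ((c.dropUntil x hx).append (c.takeUntil y hy)).exists_boundary_dart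
    S hxS hyS
  rw [darts_append, List.mem_append] at hd
  refine ⟨d, ?_, hdS⟩
  rcases hd with hd | hd
  · exact c.darts_dropUntil_subset_darts hx hd
  · exact c.darts_takeUntil_subset_darts hy hd

end Walk

end SimpleGraph

namespace Wgraph

variable {a b c : ℕ}

def isIndep : Fin a ⊕ (Fin b ⊕ Fin c) → Bool
  | .inr (.inl _) => true
  | _ => false

def isClique : Fin a ⊕ (Fin b ⊕ Fin c) → Bool
  | .inr (.inr _) => true
  | _ => false

theorem adj_inl {i : Fin a} {x : Fin a ⊕ (Fin b ⊕ Fin c)} (hx : x ≠ .inl i) :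
    (Wgraph a b c).Adj (.inl i) x :=
  ⟨hx.symm, Or.inl rfl⟩

theorem isLeft_of_adj_of_isIndep {x y : Fin a ⊕ (Fin b ⊕ Fin c)} (h : (Wgraph a b c).Adj x y)
    (hx : isIndep x) : y.isLeft := by
  obtain ⟨-, h⟩ := h
  rcases x with _ | _ | _ <;> rcases y with _ | _ | _ <;> simp_all [isIndep, inClq]

theorem isLeft_of_adj_of_isClique {x y : Fin a ⊕ (Fin b ⊕ Fin c)} (h : (Wgraph a b c).Adj x y)
    (hx : isClique x) (hy : ¬ isClique y) : y.isLeft := by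
  obtain ⟨-, h⟩ := h
  rcases x with _ | _ | _ <;> rcases y with _ | _ | _ <;> simp_all [isClique, inClq]

theorem countP_isLeft_add_countP_isIndep_add_countP_isClique
    (l : List (Fin a ⊕ (Fin b ⊕ Fin c))) :
    l.countP Sum.isLeft + l.countP isIndep + l.countP isClique = l.length := by
  induction l with
  | nil => rfl
  | cons x l ih =>
    rcases x with _ | _ | _ <;> simp [List.countP_cons, isIndep, isClique] <;> omega

theorem isClique_eq_false_of_isIndep {x : Fin a ⊕ (Fin b ⊕ Fin c)} (hx : isIndep x) :
    isClique x = false := by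
  rcases x with _ | _ | _ <;> simp_all [isIndep, isClique]

theorem twoConnected (ha : 2 ≤ a) (hcard : 3 ≤ a + (b + c)) : TwoConnected (Wgraph a b c) := by
  have hu : ∀ v, v ≠ .inl ⟨0, by omega⟩ → (Wgraph a b c).Adj (.inl ⟨0, by omega⟩) v :=
    fun _ => adj_inl
  refine ⟨connected_of_forall_adj _ hu, by simpa using hcard, fun v => ?_⟩
  by_cases hv : v = .inl ⟨0, by omega⟩
  · subst hv
    exact deleteVerts_singleton_connected_of_forall_adj (u := .inl ⟨1, by omega⟩)
      (by simp [Fin.ext_iff]) fun _ => adj_inl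
  · exact deleteVerts_singleton_connected_of_forall_adj (Ne.symm hv) hu

theorem countP_isIndep_lt_countP_isLeft {u : Fin a ⊕ (Fin b ⊕ Fin c)}
    (w : (Wgraph a b c).Walk u u) {x y : Fin a ⊕ (Fin b ⊕ Fin c)}
    (hx : x ∈ w.support) (hy : y ∈ w.support)
    (hxi : isIndep x) (hyc : isClique y) :
    w.support.tail.countP isIndep < w.support.tail.countP Sum.isLeft := by
  obtain ⟨d, hd, hfst, hsnd⟩ :=
    w.exists_dart_fst_mem_snd_notMem {z | isClique z} hy hx hyc
      (by simpa using isClique_eq_false_of_isIndep hxi)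
  exact w.countP_support_tail_lt (fun _ _ => isLeft_of_adj_of_isIndep) hd
    (isLeft_of_adj_of_isClique d.adj hfst hsnd)
    (fun h => by simp [isClique_eq_false_of_isIndep h] at hfst)

theorem length_lt_of_isCycle (ha : 1 ≤ a) (hc : 1 ≤ c) {u : Fin a ⊕ (Fin b ⊕ Fin c)}
    {w : (Wgraph a b c).Walk u u} (hw : w.IsCycle) : w.length < 2 * a + c := by
  set t := w.support.tail
  have hA : t.countP Sum.isLeft ≤ a := by
    simpa using hw.support_nodup.countP_le_card_of_subset_range (f := Sum.inl)
      (by rintro (_ | _) h <;> simp_all)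
  have hC : t.countP isClique ≤ c := by
    simpa using hw.support_nodup.countP_le_card_of_subset_range
      (f := fun i : Fin c => .inr (.inr i)) (by rintro (_ | _ | _) h <;> simp_all [isClique])
  have hBA : t.countP isIndep ≤ t.countP Sum.isLeft :=
    w.countP_support_tail_le fun _ _ => isLeft_of_adj_of_isIndep
  have hlen : t.countP Sum.isLeft + t.countP isIndep + t.countP isClique = w.length := by
    rw [countP_isLeft_add_countP_isIndep_add_countP_isClique, List.length_tail,
      w.length_support, Nat.add_sub_cancel]
  rcases Nat.eq_zero_or_pos (t.countP isIndep) with hB0 | hBpos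
  · omega
  rcases Nat.eq_zero_or_pos (t.countP isClique) with hC0 | hCpos
  · omega
  obtain ⟨x, hx, hxi⟩ := List.countP_pos_iff.mp hBpos
  obtain ⟨y, hy, hyc⟩ := List.countP_pos_iff.mp hCpos
  have hBlt : t.countP isIndep < t.countP Sum.isLeft :=
    countP_isIndep_lt_countP_isLeft w (List.mem_of_mem_tail hx) (List.mem_of_mem_tail hy)
      hxi hyc
  omega

end Wgraph

theorem Wgraph_twoConnected_cycleFree_general (n k s : ℕ)
    (hs1 : 2 ≤ s) (hs2 : s ≤ (k - 1) / 2) :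
    TwoConnected (Wgraph s (n - k + s) (k - 2 * s)) ∧
    ¬ HasCycleGe (Wgraph s (n - k + s) (k - 2 * s)) k := by
  refine ⟨Wgraph.twoConnected hs1 (by omega), ?_⟩
  rintro ⟨u, w, hw, hlen⟩
  have := Wgraph.length_lt_of_isCycle (by omega) (by omega) hw
  omega

/-- For `n ≥ k ≥ 5` and `2 ≤ s ≤ ⌊(k-1)/2⌋`, the graph
`W(n,k,s) = K_s ∨ ((n-k+s)·K_1 ∪ K_{k-2s})` is 2-connected and has no cycle of
length at least `k`. -/
theorem Wgraph_twoConnected_cycleFree (n k s : ℕ) (hnk : n ≥ k) (hk : k ≥ 5)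
    (hs1 : 2 ≤ s) (hs2 : s ≤ (k - 1) / 2) :
    TwoConnected (Wgraph s (n - k + s) (k - 2 * s)) ∧
    ¬ HasCycleGe (Wgraph s (n - k + s) (k - 2 * s)) k :=
  Wgraph_twoConnected_cycleFree_general n k s hs1 hs2
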